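/- Assume u₀ ∈ L¹(ℝ) ∩ L∞(ℝ) has finite total variation, g is consistent, Lipschitz and monotone, ω^δ is an admissible kernel, the ratio Δt/Δx is fixed, and the CFL condition (Δt/Δx)(sup|∂₁g| + sup|∂₂g|) ≤ 1 (suprema taken over [inf_j u_j^0, sup_j u_j^0]²) holds. Let u^{Δ,δ} be the piecewise constant interpolant of the numerical solution of the nonlocal scheme. Then for every δ > 0 and every t ∈ [0,T], the total variation bound ‖u^{Δ,δ}(·,t)‖_{BV(ℝ)} ≤ ‖u₀‖_{BV(ℝ)} holds. -/

import Mathlib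

open MeasureTheory Real Set Filter Topology

noncomputable section

/-- The nonlocal entropy flux `q(a,b;c) = g(a ⊔ c, b ⊔ c) - g(a ⊓ c, b ⊓ c)`. -/
def entFlux (g : ℝ → ℝ → ℝ) (a b c : ℝ) : ℝ :=
  g (max a c) (max b c) - g (min a c) (min b c)

/-- An admissible nonlocal interaction kernel with horizon `δ`. -/
structure AdmissibleKernel (δ : ℝ) (ω : ℝ → ℝ) : Prop where
  nonneg : ∀ h, 0 ≤ ω h
  integrable : Integrable ω
  supp : ∀ h, h ∉ Set.Icc 0 δ → ω h = 0
  normalized : (∫ h in (0:ℝ)..δ, ω h) = 1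

/-- `r = ⌊δ / Δx⌋`. -/
def gridR (δ Δx : ℝ) : ℕ := ⌊δ / Δx⌋₊

/-- `r ∨ 1 = max r 1`. -/
def gridR1 (δ Δx : ℝ) : ℕ := max (gridR δ Δx) 1

/-- The quadrature weights `W_k`. -/
def qWeight (ω : ℝ → ℝ) (δ Δx : ℝ) (k : ℕ) : ℝ :=
  (1 / ((k : ℝ) * Δx)) * (∫ h in (((k : ℝ) - 1) * Δx)..((k : ℝ) * Δx), ω h)
    + (if k = gridR δ Δx then 1 else 0) / ((gridR1 δ Δx : ℝ) * Δx)
        * (∫ h in ((gridR δ Δx : ℝ) * Δx)..δ, ω h)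

/-- One step of the nonlocal scheme `H`. -/
def schemeStep (g : ℝ → ℝ → ℝ) (Δt : ℝ) (W : ℕ → ℝ) (R : ℕ) (v : ℤ → ℝ) (j : ℤ) : ℝ :=
  v j - Δt * ∑ k ∈ Finset.Icc 1 R,
    W k * (g (v j) (v (j + (k : ℤ))) - g (v (j - (k : ℤ))) (v j))

/-- Iterates of the nonlocal scheme. -/
def schemeSol (g : ℝ → ℝ → ℝ) (Δt : ℝ) (W : ℕ → ℝ) (R : ℕ) (v0 : ℤ → ℝ) : ℕ → ℤ → ℝ
  | 0 => v0
  | n + 1 => schemeStep g Δt W R (schemeSol g Δt W R v0 n)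

/-- Cell averages of the initial data. -/
def cellAvg (u₀ : ℝ → ℝ) (Δx : ℝ) (j : ℤ) : ℝ :=
  (1 / Δx) * ∫ x in (((j : ℝ) - 1/2) * Δx)..(((j : ℝ) + 1/2) * Δx), u₀ x

/-- The numerical solution of the nonlocal scheme with initial data `u₀`. -/
def numSol (g : ℝ → ℝ → ℝ) (ω : ℝ → ℝ) (δ Δx Δt : ℝ) (u₀ : ℝ → ℝ) : ℕ → ℤ → ℝ :=
  schemeSol g Δt (qWeight ω δ Δx) (gridR1 δ Δx) (cellAvg u₀ Δx)

/-- Piecewise constant interpolant of a grid function. -/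
def pcInterp (Δx Δt : ℝ) (v : ℕ → ℤ → ℝ) (x t : ℝ) : ℝ :=
  v ⌊t / Δt⌋₊ ⌊x / Δx + 1/2⌋

/-- The piecewise-constant numerical solution `u^{Δ,δ}`. -/
def numInterp (g : ℝ → ℝ → ℝ) (ω : ℝ → ℝ) (δ Δx Δt : ℝ) (u₀ : ℝ → ℝ) (x t : ℝ) : ℝ :=
  pcInterp Δx Δt (numSol g ω δ Δx Δt u₀) x t

/-- `h^Δ(h) = kΔx` for `h ∈ [(k-1)Δx, kΔx)`. -/
def hDelta (Δx h : ℝ) : ℝ := ((⌊h / Δx⌋ : ℝ) + 1) * Δx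

/-- Interpolant of the test function: affine in `x` on each grid cell, piecewise
constant in `t`. -/
def phiDelta (φ : ℝ → ℝ → ℝ) (Δx Δt : ℝ) (x t : ℝ) : ℝ :=
  φ (((⌊x / Δx + 1/2⌋ : ℝ) - 1/2) * Δx) ((⌊t / Δt⌋₊ : ℝ) * Δt)
    + ((x - ((⌊x / Δx + 1/2⌋ : ℝ) - 1/2) * Δx) / Δx)
      * (φ (((⌊x / Δx + 1/2⌋ : ℝ) + 1/2) * Δx) ((⌊t / Δt⌋₊ : ℝ) * Δt)
          - φ (((⌊x / Δx + 1/2⌋ : ℝ) - 1/2) * Δx) ((⌊t / Δt⌋₊ : ℝ) * Δt))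

/-- The `2r`-point numerical flux `𝕘`. -/
def bigFlux (g : ℝ → ℝ → ℝ) (W : ℕ → ℝ) (Δx : ℝ) (R : ℕ) (v : ℤ → ℝ) (j : ℤ) : ℝ :=
  ∑ k ∈ Finset.Icc 1 R, ∑ l ∈ Finset.Icc 1 k,
    g (v (j - (l : ℤ))) (v (j - (l : ℤ) + (k : ℤ))) * W k * Δx

/-- Supremum of `|∂₁ g|` over `[B₁,B₂] × [B₁,B₂]`. -/
def supAbsDeriv1 (g : ℝ → ℝ → ℝ) (B₁ B₂ : ℝ) : ℝ :=
  sSup ((fun p : ℝ × ℝ => |derivWithin (fun a => g a p.2) (Set.Icc B₁ B₂) p.1|) ''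
    (Set.Icc B₁ B₂ ×ˢ Set.Icc B₁ B₂))

/-- Supremum of `|∂₂ g|` over `[B₁,B₂] × [B₁,B₂]`. -/
def supAbsDeriv2 (g : ℝ → ℝ → ℝ) (B₁ B₂ : ℝ) : ℝ :=
  sSup ((fun p : ℝ × ℝ => |derivWithin (fun b => g p.1 b) (Set.Icc B₁ B₂) p.2|) ''
    (Set.Icc B₁ B₂ ×ˢ Set.Icc B₁ B₂))

/-- Entropy solution of the nonlocal conservation law on `ℝ × [0,T]`. -/
structure IsEntropySolNonlocal (T δ : ℝ) (ω : ℝ → ℝ) (g : ℝ → ℝ → ℝ)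
    (u₀ : ℝ → ℝ) (u : ℝ → ℝ → ℝ) : Prop where
  bounded : ∃ M, ∀ x t, |u x t| ≤ M
  integrable : ∀ t ∈ Set.Icc (0:ℝ) T, Integrable (fun x => u x t)
  contL1 : ∀ t₀ ∈ Set.Icc (0:ℝ) T,
    Tendsto (fun t => ∫ x : ℝ, |u x t - u x t₀|) (nhdsWithin t₀ (Set.Icc 0 T)) (nhds 0)
  init : ∀ x, u x 0 = u₀ x
  entropy : ∀ φ : ℝ → ℝ → ℝ, ContDiff ℝ 1 (fun p : ℝ × ℝ => φ p.1 p.2) →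
    HasCompactSupport (fun p : ℝ × ℝ => φ p.1 p.2) → (∀ x t, 0 ≤ φ x t) → ∀ c : ℝ,
    0 ≤ (∫ t in (0:ℝ)..T, ∫ x : ℝ, |u x t - c| * deriv (fun s => φ x s) t)
      + ∫ t in (0:ℝ)..T, ∫ x : ℝ, ∫ h in (0:ℝ)..δ,
          ((φ (x + h) t - φ x t) / h) * entFlux g (u x t) (u (x + h) t) c * ω h

/-- Kruzhkov entropy solution of the local conservation law `u_t + f(u)_x = 0`. -/
structure IsEntropySolLocal (T : ℝ) (f : ℝ → ℝ) (u₀ : ℝ → ℝ) (u : ℝ → ℝ → ℝ) : Prop where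
  bounded : ∃ M, ∀ x t, |u x t| ≤ M
  integrable : ∀ t ∈ Set.Icc (0:ℝ) T, Integrable (fun x => u x t)
  contL1 : ∀ t₀ ∈ Set.Icc (0:ℝ) T,
    Tendsto (fun t => ∫ x : ℝ, |u x t - u x t₀|) (nhdsWithin t₀ (Set.Icc 0 T)) (nhds 0)
  init : ∀ x, u x 0 = u₀ x
  entropy : ∀ φ : ℝ → ℝ → ℝ, ContDiff ℝ 1 (fun p : ℝ × ℝ => φ p.1 p.2) →
    HasCompactSupport (fun p : ℝ × ℝ => φ p.1 p.2) → (∀ x t, 0 ≤ φ x t) → ∀ c : ℝ,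
    0 ≤ ∫ t in (0:ℝ)..T, ∫ x : ℝ,
        (|u x t - c| * deriv (fun s => φ x s) t
          + Real.sign (u x t - c) * (f (u x t) - f c) * deriv (fun y => φ y t) x)

/-!
Under the CFL condition the scheme is monotone, hence it preserves the range `[m, M]` of the data
and diminishes the total variation. For the latter, write the increment of `schemeStep` across the
interface `j + 1/2` via the jumps of `g` in its first and in its second argument. The jumps caused
by `v (j + 1) - v j` itself have the sign of this increment and, by the CFL condition, their
weighted sum is dominated by it; the remaining ones are the same jumps at the shifted interfaces
`j ∓ k + 1/2`, so they cancel against the former after summation over `j ∈ ℤ`. Cell averaging and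
sampling along the cells do not increase the variation either.
-/

lemma eVariationOn_Icc_int {E : Type*} [PseudoEMetricSpace E] (f : ℤ → E) {a b : ℤ}
    (hab : a ≤ b) :
    eVariationOn f (Icc a b) = ∑ j ∈ Finset.Ico a b, edist (f (j + 1)) (f j) := by
  induction b, hab using Int.leInduction with
  | base => simp
  | succ b hab ih =>
    have hpair : Icc b (b + 1) = {b, b + 1} := by ext x; simp; omega
    rw [← univ_inter (Icc a (b + 1)),
      ← eVariationOn.Icc_add_Icc f hab (Int.le_add_one le_rfl) (mem_univ b),
      univ_inter, univ_inter, ih, hpair, eVariationOn.pair, edist_comm,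
      Finset.Ico_add_one_right_eq_Icc, ← Finset.Ico_insert_right hab,
      Finset.sum_insert (by simp), add_comm]

lemma eVariationOn_univ_int_eq_tsum {E : Type*} [PseudoEMetricSpace E] (f : ℤ → E) :
    eVariationOn f univ = ∑' j, edist (f (j + 1)) (f j) := by
  apply le_antisymm
  · rw [eVariationOn.eq_biSup_inter_Icc]
    refine iSup₂_le fun p hp => ?_
    rw [univ_inter, eVariationOn_Icc_int f hp.2.2]
    exact ENNReal.sum_le_tsum _
  · rw [ENNReal.tsum_eq_iSup_sum]
    refine iSup_le fun t => ?_
    obtain ⟨a, ha⟩ := t.bddBelow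
    obtain ⟨b, hb⟩ := t.bddAbove
    have hsub : t ⊆ Finset.Ico (min a b) (b + 1) := fun j hj =>
      Finset.mem_Ico.2 ⟨(min_le_left a b).trans (ha hj), Int.lt_add_one_iff.2 (hb hj)⟩
    calc ∑ j ∈ t, edist (f (j + 1)) (f j)
        ≤ ∑ j ∈ Finset.Ico (min a b) (b + 1), edist (f (j + 1)) (f j) :=
          Finset.sum_le_sum_of_subset hsub
      _ = eVariationOn f (Icc (min a b) (b + 1)) :=
          (eVariationOn_Icc_int f ((min_le_right a b).trans (Int.le_add_one le_rfl))).symm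
      _ ≤ eVariationOn f univ := eVariationOn.mono f (subset_univ _)

lemma ENNReal.tsum_le_tsum_of_add_le_add {ι : Type*} {a b p q : ι → ENNReal}
    (h : ∀ i, a i + p i ≤ b i + q i) (hp : ∀ i, p i ≤ b i)
    (hq : ∑' i, q i = ∑' i, p i) : ∑' i, a i ≤ ∑' i, b i := by
  by_cases hb : ∑' i, b i = ⊤
  · simp [hb]
  have hpfin : ∑' i, p i ≠ ⊤ := ne_top_of_le_ne_top hb (ENNReal.tsum_le_tsum hp)
  refine ENNReal.le_of_add_le_add_right hpfin ?_
  calc ∑' i, a i + ∑' i, p i = ∑' i, (a i + p i) := ENNReal.tsum_add.symm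
    _ ≤ ∑' i, (b i + q i) := ENNReal.tsum_le_tsum h
    _ = ∑' i, b i + ∑' i, p i := by rw [ENNReal.tsum_add, hq]

lemma tsum_ofReal_sum_shift (s : Finset ℕ) (c : ℕ → ℝ) (hc : ∀ k, 0 ≤ c k)
    (x y : ℤ → ℕ → ℝ) (hx : ∀ j k, 0 ≤ x j k) (hy : ∀ j k, 0 ≤ y j k) :
    ∑' j : ℤ, ENNReal.ofReal (∑ k ∈ s, c k * (x (j - k) k + y (j + k) k))
      = ∑' j : ℤ, ENNReal.ofReal (∑ k ∈ s, c k * (x j k + y j k)) := by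
  have expand : ∀ e₁ e₂ : ℕ → ℤ ≃ ℤ,
      ∑' j, ENNReal.ofReal (∑ k ∈ s, c k * (x (e₁ k j) k + y (e₂ k j) k))
        = ∑ k ∈ s, ENNReal.ofReal (c k)
            * (∑' j, ENNReal.ofReal (x j k) + ∑' j, ENNReal.ofReal (y j k)) := by
    intro e₁ e₂
    simp_rw [ENNReal.ofReal_sum_of_nonneg (fun k _ =>
        mul_nonneg (hc k) (add_nonneg (hx _ _) (hy _ _))),
      ENNReal.ofReal_mul (hc _), ENNReal.ofReal_add (hx _ _) (hy _ _)]
    rw [Summable.tsum_finsetSum fun _ _ => ENNReal.summable]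
    refine Finset.sum_congr rfl fun k _ => ?_
    rw [ENNReal.tsum_mul_left, ENNReal.tsum_add, (e₁ k).tsum_eq fun j => ENNReal.ofReal (x j k),
      (e₂ k).tsum_eq fun j => ENNReal.ofReal (y j k)]
  exact (expand (fun k => Equiv.subRight (k : ℤ)) fun k => Equiv.addRight (k : ℤ)).trans
    (expand (fun _ => Equiv.refl ℤ) fun _ => Equiv.refl ℤ).symm

section Scheme

variable {g : ℝ → ℝ → ℝ} {Δt m M K₁ K₂ : ℝ} {W : ℕ → ℝ} {R : ℕ}

lemma schemeStep_mem_Icc (hg₁ : ∀ b, Monotone (g · b)) (hg₂ : ∀ a, Antitone (g a))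
    (hK₁ : ∀ a a' b, a ∈ Icc m M → a' ∈ Icc m M → b ∈ Icc m M →
      |g a b - g a' b| ≤ K₁ * |a - a'|)
    (hK₂ : ∀ a b b', a ∈ Icc m M → b ∈ Icc m M → b' ∈ Icc m M →
      |g a b - g a b'| ≤ K₂ * |b - b'|)
    (hΔt : 0 ≤ Δt) (hW : 0 ≤ W) (hCFL : Δt * (∑ k ∈ Finset.Icc 1 R, W k) * (K₁ + K₂) ≤ 1)
    {v : ℤ → ℝ} (hv : ∀ j, v j ∈ Icc m M) (j : ℤ) :
    schemeStep g Δt W R v j ∈ Icc m M := by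
  have hm : m ∈ Icc m M := ⟨le_rfl, (hv j).1.trans (hv j).2⟩
  have hM : M ∈ Icc m M := ⟨(hv j).1.trans (hv j).2, le_rfl⟩
  have hK₁m := hK₁ (v j) m m (hv j) hm hm
  have hK₂m := hK₂ m (v j) m hm (hv j) hm
  have hK₁M := hK₁ M (v j) M hM (hv j) hM
  have hK₂M := hK₂ M M (v j) hM hM (hv j)
  rw [abs_of_nonneg (sub_nonneg.2 (hv j).1)] at hK₁m hK₂m
  rw [abs_of_nonneg (sub_nonneg.2 (hv j).2)] at hK₁M hK₂M
  -- the flux difference lies between its values with all neighbours replaced by `M`, resp. `m`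
  have hflux : ∀ k : ℕ, -((K₁ + K₂) * (M - v j)) ≤ g (v j) (v (j + k)) - g (v (j - k)) (v j) ∧
      g (v j) (v (j + k)) - g (v (j - k)) (v j) ≤ (K₁ + K₂) * (v j - m) := by
    intro k
    have h₁ := hg₂ (v j) (hv (j + k)).1
    have h₂ := hg₁ (v j) (hv (j - k)).1
    have h₃ := hg₂ (v j) (hv (j + k)).2
    have h₄ := hg₁ (v j) (hv (j - k)).2
    simp only at h₁ h₂ h₃ h₄
    constructor <;> linarith [le_abs_self (g (v j) m - g m m), neg_le_abs (g m (v j) - g m m),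
      le_abs_self (g M M - g (v j) M), neg_le_abs (g M M - g M (v j))]
  have hlow := Finset.sum_le_sum (s := Finset.Icc 1 R) fun k _ =>
    mul_le_mul_of_nonneg_left (hflux k).2 (hW k)
  have hup := Finset.sum_le_sum (s := Finset.Icc 1 R) fun k _ =>
    mul_le_mul_of_nonneg_left (hflux k).1 (hW k)
  rw [← Finset.sum_mul] at hlow hup
  have hvm : 0 ≤ v j - m := sub_nonneg.2 (hv j).1
  have hvM : 0 ≤ M - v j := sub_nonneg.2 (hv j).2
  simp only [schemeStep, mem_Icc]
  constructor
  · nlinarith [mul_le_mul_of_nonneg_left hlow hΔt, mul_le_mul_of_nonneg_right hCFL hvm]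
  · nlinarith [mul_le_mul_of_nonneg_left hup hΔt, mul_le_mul_of_nonneg_right hCFL hvM]

/- Increments across the interface `j + 1/2` of the `k`-th flux terms of the scheme, split into
the change of the first and of the second argument of `g`. -/
def fluxJumpFst (g : ℝ → ℝ → ℝ) (v : ℤ → ℝ) (j : ℤ) (k : ℕ) : ℝ :=
  g (v (j + 1)) (v (j + k + 1)) - g (v j) (v (j + k + 1))

def fluxJumpSnd (g : ℝ → ℝ → ℝ) (v : ℤ → ℝ) (j : ℤ) (k : ℕ) : ℝ :=
  g (v (j - k)) (v (j + 1)) - g (v (j - k)) (v j)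

lemma schemeStep_succ_sub (v : ℤ → ℝ) (j : ℤ) :
    schemeStep g Δt W R v (j + 1) - schemeStep g Δt W R v j =
      (v (j + 1) - v j)
        - Δt * ∑ k ∈ Finset.Icc 1 R, W k * (fluxJumpFst g v j k - fluxJumpSnd g v j k)
        - Δt * ∑ k ∈ Finset.Icc 1 R,
            W k * (fluxJumpSnd g v (j + k) k - fluxJumpFst g v (j - k) k) := by
  have hsplit : ∑ k ∈ Finset.Icc 1 R,
        W k * (g (v (j + 1)) (v (j + 1 + k)) - g (v (j + 1 - k)) (v (j + 1)))
      - ∑ k ∈ Finset.Icc 1 R, W k * (g (v j) (v (j + k)) - g (v (j - k)) (v j))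
      = ∑ k ∈ Finset.Icc 1 R, W k * (fluxJumpFst g v j k - fluxJumpSnd g v j k)
        + ∑ k ∈ Finset.Icc 1 R,
            W k * (fluxJumpSnd g v (j + k) k - fluxJumpFst g v (j - k) k) := by
    rw [← Finset.sum_sub_distrib, ← Finset.sum_add_distrib]
    refine Finset.sum_congr rfl fun k _ => ?_
    simp only [fluxJumpFst, fluxJumpSnd, add_sub_cancel_right, sub_add_cancel,
      add_right_comm j 1, sub_add_eq_add_sub]
    ring
  simp only [schemeStep]
  linear_combination (-Δt) * hsplit

lemma mul_sum_abs_fluxJump_le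
    (hK₁ : ∀ a a' b, a ∈ Icc m M → a' ∈ Icc m M → b ∈ Icc m M →
      |g a b - g a' b| ≤ K₁ * |a - a'|)
    (hK₂ : ∀ a b b', a ∈ Icc m M → b ∈ Icc m M → b' ∈ Icc m M →
      |g a b - g a b'| ≤ K₂ * |b - b'|)
    (hΔt : 0 ≤ Δt) (hW : 0 ≤ W) (hCFL : Δt * (∑ k ∈ Finset.Icc 1 R, W k) * (K₁ + K₂) ≤ 1)
    {v : ℤ → ℝ} (hv : ∀ j, v j ∈ Icc m M) (j : ℤ) :
    Δt * ∑ k ∈ Finset.Icc 1 R, W k * (|fluxJumpFst g v j k| + |fluxJumpSnd g v j k|)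
      ≤ |v (j + 1) - v j| := by
  have hk : ∀ k : ℕ, W k * (|fluxJumpFst g v j k| + |fluxJumpSnd g v j k|)
      ≤ W k * ((K₁ + K₂) * |v (j + 1) - v j|) := fun k =>
    mul_le_mul_of_nonneg_left (by
      simp only [fluxJumpFst, fluxJumpSnd]
      linarith [hK₁ _ _ (v (j + k + 1)) (hv (j + 1)) (hv j) (hv _),
        hK₂ (v (j - k)) _ _ (hv _) (hv (j + 1)) (hv j)]) (hW k)
  calc Δt * ∑ k ∈ Finset.Icc 1 R, W k * (|fluxJumpFst g v j k| + |fluxJumpSnd g v j k|)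
      ≤ Δt * ∑ k ∈ Finset.Icc 1 R, W k * ((K₁ + K₂) * |v (j + 1) - v j|) :=
        mul_le_mul_of_nonneg_left (Finset.sum_le_sum fun k _ => hk k) hΔt
    _ = Δt * (∑ k ∈ Finset.Icc 1 R, W k) * (K₁ + K₂) * |v (j + 1) - v j| := by
        rw [← Finset.sum_mul]; ring
    _ ≤ |v (j + 1) - v j| :=
        mul_le_of_le_one_left (abs_nonneg _) hCFL

lemma abs_schemeStep_succ_sub_add_le (hg₁ : ∀ b, Monotone (g · b)) (hg₂ : ∀ a, Antitone (g a))
    (hK₁ : ∀ a a' b, a ∈ Icc m M → a' ∈ Icc m M → b ∈ Icc m M →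
      |g a b - g a' b| ≤ K₁ * |a - a'|)
    (hK₂ : ∀ a b b', a ∈ Icc m M → b ∈ Icc m M → b' ∈ Icc m M →
      |g a b - g a b'| ≤ K₂ * |b - b'|)
    (hΔt : 0 ≤ Δt) (hW : 0 ≤ W) (hCFL : Δt * (∑ k ∈ Finset.Icc 1 R, W k) * (K₁ + K₂) ≤ 1)
    {v : ℤ → ℝ} (hv : ∀ j, v j ∈ Icc m M) (j : ℤ) :
    |schemeStep g Δt W R v (j + 1) - schemeStep g Δt W R v j|
        + Δt * ∑ k ∈ Finset.Icc 1 R, W k * (|fluxJumpFst g v j k| + |fluxJumpSnd g v j k|)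
      ≤ |v (j + 1) - v j| + Δt * ∑ k ∈ Finset.Icc 1 R,
          W k * (|fluxJumpFst g v (j - k) k| + |fluxJumpSnd g v (j + k) k|) := by
  set P := Δt * ∑ k ∈ Finset.Icc 1 R, W k * (|fluxJumpFst g v j k| + |fluxJumpSnd g v j k|)
  set F := Δt * ∑ k ∈ Finset.Icc 1 R,
    W k * (fluxJumpSnd g v (j + k) k - fluxJumpFst g v (j - k) k)
  have hP : P ≤ |v (j + 1) - v j| := mul_sum_abs_fluxJump_le hK₁ hK₂ hΔt hW hCFL hv j
  have hF : |F| ≤ Δt * ∑ k ∈ Finset.Icc 1 R,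
      W k * (|fluxJumpFst g v (j - k) k| + |fluxJumpSnd g v (j + k) k|) := by
    rw [abs_mul, abs_of_nonneg hΔt]
    refine mul_le_mul_of_nonneg_left ((Finset.abs_sum_le_sum_abs _ _).trans
      (Finset.sum_le_sum fun k _ => ?_)) hΔt
    rw [abs_mul, abs_of_nonneg (hW k)]
    exact mul_le_mul_of_nonneg_left ((abs_sub _ _).trans_eq (add_comm _ _)) (hW k)
  rw [schemeStep_succ_sub]
  -- by monotonicity of `g`, the jumps in the two arguments have opposite signs
  rcases le_total (v j) (v (j + 1)) with h | h
  · have hE : Δt * ∑ k ∈ Finset.Icc 1 R, W k * (fluxJumpFst g v j k - fluxJumpSnd g v j k)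
        = P := by
      refine congrArg (Δt * ·) (Finset.sum_congr rfl fun k _ => ?_)
      simp only [fluxJumpFst, fluxJumpSnd]
      rw [abs_of_nonneg (sub_nonneg.2 (hg₁ _ h)), abs_of_nonpos (sub_nonpos.2 (hg₂ _ h))]
      ring
    rw [hE]
    rw [abs_of_nonneg (sub_nonneg.2 h)] at hP ⊢
    have := abs_sub (v (j + 1) - v j - P) F
    rw [abs_of_nonneg (sub_nonneg.2 hP)] at this
    linarith
  · have hE : Δt * ∑ k ∈ Finset.Icc 1 R, W k * (fluxJumpFst g v j k - fluxJumpSnd g v j k)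
        = -P := by
      rw [← mul_neg, ← Finset.sum_neg_distrib]
      refine congrArg (Δt * ·) (Finset.sum_congr rfl fun k _ => ?_)
      simp only [fluxJumpFst, fluxJumpSnd]
      rw [abs_of_nonpos (sub_nonpos.2 (hg₁ _ h)), abs_of_nonneg (sub_nonneg.2 (hg₂ _ h))]
      ring
    rw [hE, sub_neg_eq_add]
    rw [abs_of_nonpos (sub_nonpos.2 h)] at hP ⊢
    have := abs_sub (v (j + 1) - v j + P) F
    rw [abs_of_nonpos (by linarith : v (j + 1) - v j + P ≤ 0)] at this
    linarith

lemma eVariationOn_schemeStep_le (hg₁ : ∀ b, Monotone (g · b)) (hg₂ : ∀ a, Antitone (g a))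
    (hK₁ : ∀ a a' b, a ∈ Icc m M → a' ∈ Icc m M → b ∈ Icc m M →
      |g a b - g a' b| ≤ K₁ * |a - a'|)
    (hK₂ : ∀ a b b', a ∈ Icc m M → b ∈ Icc m M → b' ∈ Icc m M →
      |g a b - g a b'| ≤ K₂ * |b - b'|)
    (hΔt : 0 ≤ Δt) (hW : 0 ≤ W) (hCFL : Δt * (∑ k ∈ Finset.Icc 1 R, W k) * (K₁ + K₂) ≤ 1)
    {v : ℤ → ℝ} (hv : ∀ j, v j ∈ Icc m M) :
    eVariationOn (schemeStep g Δt W R v) univ ≤ eVariationOn v univ := by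
  have hc : ∀ k, 0 ≤ Δt * W k := fun k => mul_nonneg hΔt (hW k)
  have hP : ∀ j : ℤ,
      0 ≤ Δt * ∑ k ∈ Finset.Icc 1 R, W k * (|fluxJumpFst g v j k| + |fluxJumpSnd g v j k|) :=
    fun j => mul_nonneg hΔt (Finset.sum_nonneg fun k _ => mul_nonneg (hW k) (by positivity))
  simp only [eVariationOn_univ_int_eq_tsum, edist_dist, Real.dist_eq]
  refine ENNReal.tsum_le_tsum_of_add_le_add
    (p := fun j => ENNReal.ofReal (Δt * ∑ k ∈ Finset.Icc 1 R,
      W k * (|fluxJumpFst g v j k| + |fluxJumpSnd g v j k|)))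
    (q := fun j => ENNReal.ofReal (Δt * ∑ k ∈ Finset.Icc 1 R,
      W k * (|fluxJumpFst g v (j - k) k| + |fluxJumpSnd g v (j + k) k|)))
    (fun j => ?_) (fun j => ?_) ?_
  · rw [← ENNReal.ofReal_add (abs_nonneg _) (hP j),
      ← ENNReal.ofReal_add (abs_nonneg _) (mul_nonneg hΔt (Finset.sum_nonneg fun k _ =>
        mul_nonneg (hW k) (by positivity)))]
    exact ENNReal.ofReal_le_ofReal
      (abs_schemeStep_succ_sub_add_le hg₁ hg₂ hK₁ hK₂ hΔt hW hCFL hv j)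
  · exact ENNReal.ofReal_le_ofReal (mul_sum_abs_fluxJump_le hK₁ hK₂ hΔt hW hCFL hv j)
  · simp only [Finset.mul_sum, ← mul_assoc]
    exact tsum_ofReal_sum_shift _ _ hc (fun j k => |fluxJumpFst g v j k|)
      (fun j k => |fluxJumpSnd g v j k|) (fun _ _ => abs_nonneg _) (fun _ _ => abs_nonneg _)

lemma schemeSol_mem_Icc (hg₁ : ∀ b, Monotone (g · b)) (hg₂ : ∀ a, Antitone (g a))
    (hK₁ : ∀ a a' b, a ∈ Icc m M → a' ∈ Icc m M → b ∈ Icc m M →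
      |g a b - g a' b| ≤ K₁ * |a - a'|)
    (hK₂ : ∀ a b b', a ∈ Icc m M → b ∈ Icc m M → b' ∈ Icc m M →
      |g a b - g a b'| ≤ K₂ * |b - b'|)
    (hΔt : 0 ≤ Δt) (hW : 0 ≤ W) (hCFL : Δt * (∑ k ∈ Finset.Icc 1 R, W k) * (K₁ + K₂) ≤ 1)
    {v₀ : ℤ → ℝ} (hv₀ : ∀ j, v₀ j ∈ Icc m M) (n : ℕ) (j : ℤ) :
    schemeSol g Δt W R v₀ n j ∈ Icc m M := by
  induction n generalizing j with
  | zero => exact hv₀ j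
  | succ n ih => exact schemeStep_mem_Icc hg₁ hg₂ hK₁ hK₂ hΔt hW hCFL ih j

lemma eVariationOn_schemeSol_le (hg₁ : ∀ b, Monotone (g · b)) (hg₂ : ∀ a, Antitone (g a))
    (hK₁ : ∀ a a' b, a ∈ Icc m M → a' ∈ Icc m M → b ∈ Icc m M →
      |g a b - g a' b| ≤ K₁ * |a - a'|)
    (hK₂ : ∀ a b b', a ∈ Icc m M → b ∈ Icc m M → b' ∈ Icc m M →
      |g a b - g a b'| ≤ K₂ * |b - b'|)
    (hΔt : 0 ≤ Δt) (hW : 0 ≤ W) (hCFL : Δt * (∑ k ∈ Finset.Icc 1 R, W k) * (K₁ + K₂) ≤ 1)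
    {v₀ : ℤ → ℝ} (hv₀ : ∀ j, v₀ j ∈ Icc m M) (n : ℕ) :
    eVariationOn (schemeSol g Δt W R v₀ n) univ ≤ eVariationOn v₀ univ := by
  induction n with
  | zero => exact le_rfl
  | succ n ih =>
    exact (eVariationOn_schemeStep_le hg₁ hg₂ hK₁ hK₂ hΔt hW hCFL
      (schemeSol_mem_Icc hg₁ hg₂ hK₁ hK₂ hΔt hW hCFL hv₀ n)).trans ih

end Scheme

lemma sum_integral_cells {f : ℝ → ℝ} (hf : ∀ a b, IntervalIntegrable f volume a b) (Δx : ℝ)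
    (R : ℕ) :
    ∑ k ∈ Finset.Icc 1 R, ∫ x in ((k : ℝ) - 1) * Δx..k * Δx, f x = ∫ x in 0..R * Δx, f x := by
  induction R with
  | zero => simp
  | succ R ih =>
    rw [Finset.sum_Icc_succ_top (Nat.le_add_left 1 R), ih, Nat.cast_succ, add_sub_cancel_right,
      intervalIntegral.integral_add_adjacent_intervals (hf _ _) (hf _ _)]

section Weights

variable {ω : ℝ → ℝ} {δ Δx : ℝ}

lemma gridR_mul_le (hδ : 0 ≤ δ) (hΔx : 0 < Δx) : (gridR δ Δx : ℝ) * Δx ≤ δ :=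
  (le_div_iff₀ hΔx).1 (Nat.floor_le (div_nonneg hδ hΔx.le))

lemma qWeight_nonneg (hδ : 0 ≤ δ) (hΔx : 0 < Δx) (hω : ∀ h, 0 ≤ ω h) :
    0 ≤ qWeight ω δ Δx := fun k => by
  have hcell : ((k : ℝ) - 1) * Δx ≤ k * Δx := by nlinarith
  exact add_nonneg
    (mul_nonneg (by positivity) (intervalIntegral.integral_nonneg hcell fun h _ => hω h))
    (mul_nonneg (div_nonneg (by split_ifs <;> norm_num) (by positivity))
      (intervalIntegral.integral_nonneg (gridR_mul_le hδ hΔx) fun h _ => hω h))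

lemma sum_qWeight_le (hδ : 0 ≤ δ) (hΔx : 0 < Δx) (hω : AdmissibleKernel δ ω) :
    ∑ k ∈ Finset.Icc 1 (gridR1 δ Δx), qWeight ω δ Δx k ≤ 1 / Δx := by
  set r := gridR δ Δx
  set R := gridR1 δ Δx
  set T := ∫ h in (r : ℝ) * Δx..δ, ω h
  have hint : ∀ a b, IntervalIntegrable ω volume a b :=
    fun a b => hω.integrable.intervalIntegrable
  have hT : 0 ≤ T := intervalIntegral.integral_nonneg (gridR_mul_le hδ hΔx) fun h _ => hω.nonneg h
  have hterm : ∀ k ∈ Finset.Icc 1 R, qWeight ω δ Δx k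
      ≤ 1 / Δx * ((∫ h in ((k : ℝ) - 1) * Δx..k * Δx, ω h) + if k = r then T else 0) := by
    intro k hk
    have hk : (1 : ℝ) ≤ k := by exact_mod_cast (Finset.mem_Icc.1 hk).1
    have hR : (1 : ℝ) ≤ R := by exact_mod_cast le_max_right r 1
    have hcell : 0 ≤ ∫ h in ((k : ℝ) - 1) * Δx..k * Δx, ω h :=
      intervalIntegral.integral_nonneg (by nlinarith) fun h _ => hω.nonneg h
    rw [qWeight, mul_add]
    refine add_le_add (mul_le_mul_of_nonneg_right
      (one_div_le_one_div_of_le hΔx (by nlinarith)) hcell) ?_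
    split_ifs
    · exact mul_le_mul_of_nonneg_right (one_div_le_one_div_of_le hΔx (by nlinarith)) hT
    · simp
  have hmass : (∫ h in 0..R * Δx, ω h) + (if r ∈ Finset.Icc 1 R then T else 0) = 1 := by
    rcases Nat.eq_zero_or_pos r with hr | hr
    · have hδΔx : δ < Δx := by
        have := Nat.floor_eq_zero.1 hr
        rwa [div_lt_one hΔx] at this
      have hzero : ∫ h in δ..Δx, ω h = 0 := by
        rw [intervalIntegral.integral_of_le hδΔx.le, setIntegral_congr_fun measurableSet_Ioc
          fun x hx => hω.supp x fun hmem => absurd hmem.2 (not_le.2 hx.1)]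
        simp
      have hR : R = 1 := by rw [show R = max r 1 from rfl, hr]; rfl
      rw [hR, if_neg (by simp [hr]), Nat.cast_one, one_mul,
        ← intervalIntegral.integral_add_adjacent_intervals (hint 0 δ) (hint δ Δx),
        hω.normalized, hzero]
      norm_num
    · have hR : R = r := max_eq_left hr
      rw [hR, if_pos (Finset.mem_Icc.2 ⟨hr, le_rfl⟩),
        intervalIntegral.integral_add_adjacent_intervals (hint _ _) (hint _ _), hω.normalized]
  calc ∑ k ∈ Finset.Icc 1 R, qWeight ω δ Δx k
      ≤ ∑ k ∈ Finset.Icc 1 R,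
          1 / Δx * ((∫ h in ((k : ℝ) - 1) * Δx..k * Δx, ω h) + if k = r then T else 0) :=
        Finset.sum_le_sum hterm
    _ = 1 / Δx := by
        rw [← Finset.mul_sum, Finset.sum_add_distrib, sum_integral_cells hint,
          Finset.sum_ite_eq', hmass, mul_one]

end Weights

section CellAverages

variable {u₀ : ℝ → ℝ} {Δx m M : ℝ}

lemma cellAvg_eq_integral_shift (u₀ : ℝ → ℝ) (Δx : ℝ) (j : ℤ) :
    cellAvg u₀ Δx j = 1 / Δx * ∫ s in 0..Δx, u₀ (s + (j - 1 / 2) * Δx) := by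
  rw [cellAvg, intervalIntegral.integral_comp_add_right]
  congr 2 <;> ring

lemma cellAvg_mem_Icc (hΔx : 0 < Δx) (hu₀ : Integrable u₀) (hu₀b : ∀ x, u₀ x ∈ Icc m M)
    (j : ℤ) : cellAvg u₀ Δx j ∈ Icc m M := by
  have hint : IntervalIntegrable (fun s => u₀ (s + (j - 1 / 2) * Δx)) volume 0 Δx :=
    (hu₀.comp_add_right _).intervalIntegrable
  have hlow := intervalIntegral.integral_mono_on hΔx.le intervalIntegrable_const hint
    fun s _ => (hu₀b (s + (j - 1 / 2) * Δx)).1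
  have hup := intervalIntegral.integral_mono_on hΔx.le hint intervalIntegrable_const
    fun s _ => (hu₀b (s + (j - 1 / 2) * Δx)).2
  simp only [intervalIntegral.integral_const, sub_zero, smul_eq_mul] at hlow hup
  rw [cellAvg_eq_integral_shift, one_div_mul_eq_div, mem_Icc, le_div_iff₀ hΔx, div_le_iff₀ hΔx]
  constructor <;> linarith

lemma eVariationOn_cellAvg_le (hΔx : 0 < Δx) (hu₀ : Integrable u₀) :
    eVariationOn (cellAvg u₀ Δx) univ ≤ eVariationOn u₀ univ := by
  by_cases hV : eVariationOn u₀ univ = ⊤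
  · simp [hV]
  set V := (eVariationOn u₀ univ).toReal
  -- `cellAvg u₀ Δx` is the average over `s ∈ [0, Δx]` of the samples `w s` of `u₀`
  set w : ℝ → ℤ → ℝ := fun s j => u₀ (s + (j - 1 / 2) * Δx)
  have hw : ∀ s (t : Finset ℤ), ∑ j ∈ t, |w s (j + 1) - w s j| ≤ V := by
    intro s t
    have hmono : Monotone fun j : ℤ => s + (j - 1 / 2) * Δx := fun a b hab => by
      have : (a : ℝ) ≤ b := by exact_mod_cast hab
      nlinarith
    have hvar := (ENNReal.sum_le_tsum t).trans <|
      (eVariationOn_univ_int_eq_tsum (w s)).symm.trans_le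
        (eVariationOn.comp_le_of_monotoneOn u₀ _ (hmono.monotoneOn _) (mapsTo_univ _ _))
    simp only [edist_dist, Real.dist_eq] at hvar
    rwa [← ENNReal.ofReal_sum_of_nonneg fun _ _ => abs_nonneg _,
      ENNReal.ofReal_le_iff_le_toReal hV] at hvar
  have hwint : ∀ j, IntervalIntegrable (fun s => w s j) volume 0 Δx :=
    fun j => (hu₀.comp_add_right _).intervalIntegrable
  rw [eVariationOn_univ_int_eq_tsum, ENNReal.tsum_eq_iSup_sum]
  refine iSup_le fun t => ?_
  simp only [edist_dist, Real.dist_eq]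
  rw [← ENNReal.ofReal_sum_of_nonneg fun _ _ => abs_nonneg _, ENNReal.ofReal_le_iff_le_toReal hV]
  calc ∑ j ∈ t, |cellAvg u₀ Δx (j + 1) - cellAvg u₀ Δx j|
      ≤ ∑ j ∈ t, 1 / Δx * ∫ s in 0..Δx, |w s (j + 1) - w s j| := by
        refine Finset.sum_le_sum fun j _ => ?_
        rw [cellAvg_eq_integral_shift, cellAvg_eq_integral_shift, ← mul_sub,
          ← intervalIntegral.integral_sub (hwint _) (hwint _), abs_mul,
          abs_of_pos (one_div_pos.2 hΔx)]
        exact mul_le_mul_of_nonneg_left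
          (intervalIntegral.abs_integral_le_integral_abs hΔx.le) (one_div_pos.2 hΔx).le
    _ = 1 / Δx * ∫ s in 0..Δx, ∑ j ∈ t, |w s (j + 1) - w s j| := by
        rw [← Finset.mul_sum, intervalIntegral.integral_finsetSum fun j _ =>
          ((hwint _).sub (hwint _)).abs]
    _ ≤ 1 / Δx * ∫ _ in 0..Δx, V := by
        refine mul_le_mul_of_nonneg_left (intervalIntegral.integral_mono_on hΔx.le
          (by simpa only [Finset.sum_fn] using
            IntervalIntegrable.sum t fun j _ => ((hwint (j + 1)).sub (hwint j)).abs)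
          intervalIntegrable_const fun s _ => hw s t) (one_div_pos.2 hΔx).le
    _ = V := by
        rw [intervalIntegral.integral_const, smul_eq_mul, sub_zero]
        field_simp

end CellAverages

lemma eVariationOn_pcInterp_le {Δx : ℝ} (hΔx : 0 < Δx) (Δt : ℝ) (v : ℕ → ℤ → ℝ) (t : ℝ) :
    eVariationOn (fun x => pcInterp Δx Δt v x t) univ ≤ eVariationOn (v ⌊t / Δt⌋₊) univ :=
  eVariationOn.comp_le_of_monotoneOn (v ⌊t / Δt⌋₊) (fun x : ℝ => ⌊x / Δx + 1 / 2⌋)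
    (fun _ _ _ _ hxy => Int.floor_mono (by gcongr)) (mapsTo_univ _ _)

theorem numerical_BV_bound_general
    (T δ Δx Δt K₁ K₂ m M : ℝ) (hδ : 0 < δ) (hΔx : 0 < Δx) (hΔt : 0 < Δt)
    (ω : ℝ → ℝ) (hω : AdmissibleKernel δ ω)
    (g : ℝ → ℝ → ℝ)
    (hmono1 : ∀ a a' b, a ≤ a' → g a b ≤ g a' b)
    (hmono2 : ∀ a b b', b ≤ b' → g a b' ≤ g a b)
    (u₀ : ℝ → ℝ) (hu₀i : Integrable u₀) (hu₀b : ∀ x, u₀ x ∈ Set.Icc m M)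
    (hK₁ : ∀ a a' b, a ∈ Set.Icc m M → a' ∈ Set.Icc m M → b ∈ Set.Icc m M →
      |g a b - g a' b| ≤ K₁ * |a - a'|)
    (hK₂ : ∀ a b b', a ∈ Set.Icc m M → b ∈ Set.Icc m M → b' ∈ Set.Icc m M →
      |g a b - g a b'| ≤ K₂ * |b - b'|)
    (hCFL : Δt / Δx * (K₁ + K₂) ≤ 1) :
    ∀ t ∈ Set.Icc (0:ℝ) T,
      eVariationOn (fun x => numInterp g ω δ Δx Δt u₀ x t) Set.univ
        ≤ eVariationOn u₀ Set.univ := by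
  intro t _
  have hg₁ : ∀ b, Monotone (g · b) := fun b _ _ h => hmono1 _ _ b h
  have hg₂ : ∀ a, Antitone (g a) := fun a _ _ h => hmono2 a _ _ h
  have hW := qWeight_nonneg hδ.le hΔx hω.nonneg
  have hCFL' : Δt * (∑ k ∈ Finset.Icc 1 (gridR1 δ Δx), qWeight ω δ Δx k) * (K₁ + K₂) ≤ 1 := by
    have hsum := sum_qWeight_le hδ.le hΔx hω
    have hsum₀ := Finset.sum_nonneg fun k (_ : k ∈ Finset.Icc 1 (gridR1 δ Δx)) => hW k
    rw [div_eq_mul_one_div] at hCFL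
    rcases le_total 0 (K₁ + K₂) with hK | hK
    · nlinarith [mul_le_mul_of_nonneg_left hsum hΔt.le]
    · nlinarith [mul_nonneg hΔt.le hsum₀]
  calc eVariationOn (fun x => numInterp g ω δ Δx Δt u₀ x t) univ
      ≤ eVariationOn (numSol g ω δ Δx Δt u₀ ⌊t / Δt⌋₊) univ :=
        eVariationOn_pcInterp_le hΔx Δt _ t
    _ ≤ eVariationOn (cellAvg u₀ Δx) univ :=
        eVariationOn_schemeSol_le hg₁ hg₂ hK₁ hK₂ hΔt.le hW hCFL'
          (cellAvg_mem_Icc hΔx hu₀i hu₀b) _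
    _ ≤ eVariationOn u₀ univ := eVariationOn_cellAvg_le hΔx hu₀i

/-- total variation bound on the piecewise constant numerical solution. -/
theorem numerical_BV_bound
    (T δ Δx Δt C K₁ K₂ m M : ℝ) (hT : 0 < T) (hδ : 0 < δ) (hΔx : 0 < Δx) (hΔt : 0 < Δt)
    (ω : ℝ → ℝ) (hω : AdmissibleKernel δ ω)
    (f : ℝ → ℝ) (g : ℝ → ℝ → ℝ) (C : ℝ)
    (hcons : ∀ x, g x x = f x)
    (hLip : ∀ a b c d, |g a b - g c d| ≤ C * (|a - c| + |b - d|))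
    (hmono1 : ∀ a a' b, a ≤ a' → g a b ≤ g a' b)
    (hmono2 : ∀ a b b', b ≤ b' → g a b' ≤ g a b)
    (u₀ : ℝ → ℝ) (hu₀i : Integrable u₀) (hu₀b : ∀ x, u₀ x ∈ Set.Icc m M)
    (hu₀BV : BoundedVariationOn u₀ Set.univ)
    (hK₁ : ∀ a a' b, a ∈ Set.Icc m M → a' ∈ Set.Icc m M → b ∈ Set.Icc m M →
      |g a b - g a' b| ≤ K₁ * |a - a'|)
    (hK₂ : ∀ a b b', a ∈ Set.Icc m M → b ∈ Set.Icc m M → b' ∈ Set.Icc m M →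
      |g a b - g a b'| ≤ K₂ * |b - b'|)
    (hCFL : Δt / Δx * (K₁ + K₂) ≤ 1) :
    ∀ t ∈ Set.Icc (0:ℝ) T,
      eVariationOn (fun x => numInterp g ω δ Δx Δt u₀ x t) Set.univ
        ≤ eVariationOn u₀ Set.univ :=
  numerical_BV_bound_general T δ Δx Δt K₁ K₂ m M hδ hΔx hΔt ω hω g hmono1 hmono2 u₀ hu₀i hu₀b hK₁
    hK₂ hCFL
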